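/- There exist constants C > 0 and c > 0 and a natural number n0 such that for all integers n ≥ n0 with k ≤ n: if (X_1,…,X_k) is multinomial with parameters h and p where p_1 ≥ p_2 ≥ … ≥ p_k, and h·p_1 ≥ C·log n, then Pr( ∩_{i=2}^k {X_1 > X_i} ) ≥ c·p_1. -/

import Mathlib

/-!
Write `μ = h p₁`. Chernoff bounds and a union bound over the `k ≤ n` opinions show that, up to
probability `1/4`, opinion 1 has more than `μ/2` samples and no opinion has more than `3μ`
(this is where `μ ≥ C log n` enters). If opinion 1 is then not the strict winner, let `M` be the
largest count of a rival and move `M + 1 - X₁` samples of a top rival `j` over to opinion 1: the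
result is a strict win for 1, at least as likely since `p₁` is maximal. Spreading the mass of each
configuration evenly over the `C(M, d)` choices of the `d = M + 1 - X₁` moved samples, a strict win
`ω'` receives from each rival `j` at most `C(X'₁, d)/C(X'₁ - 1, d) = X'₁/(X'_j + 1) ≤ 7` times its
own mass, and only rivals with `X'_j ≥ μ/2 - 1` contribute, of which there are at most `3/p₁`.
Hence `3/4 ≤ (1 + 21/p₁) Pr(1 wins strictly)`.
-/

open scoped BigOperators

noncomputable section

/-- The number of the `h` i.i.d. samples `ω` that are equal to opinion `i`. -/
def cnt {k h : ℕ} (ω : Fin h → Fin k) (i : Fin k) : ℕ :=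
  (Finset.univ.filter fun j => ω j = i).card

/-- The probability of the event `A` under `h` i.i.d. samples drawn from the
probability vector `p` on `Fin k` (multinomial sampling). -/
def multiPr (k h : ℕ) (p : Fin k → ℝ) (A : Set (Fin h → Fin k)) : ℝ :=
  ∑ ω : Fin h → Fin k, A.indicator (fun ω => ∏ j, p (ω j)) ω

/-- The maximal number of samples received by an opinion. -/
def maxCnt {k h : ℕ} (ω : Fin h → Fin k) : ℕ :=
  Finset.univ.sup (cnt ω)

/-- The number of opinions achieving the maximal number of samples. -/
def numMax {k h : ℕ} (ω : Fin h → Fin k) : ℕ :=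
  (Finset.univ.filter fun i => cnt ω i = maxCnt ω).card

/-- The probability that opinion `i` wins the `h`-majority with uniform
tie-breaking, jointly with the event `A`:
`E[ 1_A · 1{X_i = max_l X_l} / #{l : X_l maximal} ]`. -/
def winPrOn (k h : ℕ) (p : Fin k → ℝ) (A : Set (Fin h → Fin k)) (i : Fin k) : ℝ :=
  ∑ ω : Fin h → Fin k,
    (A ∩ {ω' | cnt ω' i = maxCnt ω'}).indicator
      (fun ω => (∏ j, p (ω j)) / (numMax ω : ℝ)) ω

/-- The probability that opinion `i` wins the `h`-majority with uniform tie-breaking. -/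
def winPr (k h : ℕ) (p : Fin k → ℝ) (i : Fin k) : ℝ :=
  winPrOn k h p Set.univ i

/-- `W_{i,strict}`: opinion `i` is the unique most sampled opinion. -/
def Wstrict (k h : ℕ) (i : Fin k) : Set (Fin h → Fin k) :=
  {ω | ∀ j, j ≠ i → cnt ω j < cnt ω i}

/-- `W_{i,ties}`: opinion `i` is among the most sampled opinions. -/
def Wties (k h : ℕ) (i : Fin k) : Set (Fin h → Fin k) :=
  {ω | ∀ j, j ≠ i → cnt ω j ≤ cnt ω i}

/-- `W_{1,2,strict}`: opinion `i₁` or opinion `i₂` is the unique most sampled opinion. -/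
def W12strict (k h : ℕ) (i₁ i₂ : Fin k) : Set (Fin h → Fin k) :=
  Wstrict k h i₁ ∪ Wstrict k h i₂

/-- Opinion 1 (as an element of `Fin k`, assuming `2 ≤ k`). -/
def o₁ (k : ℕ) (hk : 2 ≤ k) : Fin k := ⟨0, by omega⟩

/-- Opinion 2 (as an element of `Fin k`, assuming `2 ≤ k`). -/
def o₂ (k : ℕ) (hk : 2 ≤ k) : Fin k := ⟨1, by omega⟩

open Finset

/-- Each `a ∈ G` spreads (at least) its weight over the switches `x ∈ S a` with fractions
`c a x`, each landing on `F a x ∈ T`; `K` bounds the total fraction arriving at any `b ∈ T`. -/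
theorem Finset.sum_le_mul_sum_of_fractional_switching {α β γ : Type*} [DecidableEq β]
    {G : Finset α} {T : Finset β} {S : α → Finset γ} {F : α → γ → β} {c : α → γ → ℝ}
    {w : α → ℝ} {w' : β → ℝ} {K : ℝ}
    (hw : ∀ a ∈ G, 0 ≤ w a) (hw' : ∀ b ∈ T, 0 ≤ w' b) (hc : ∀ a ∈ G, ∀ x ∈ S a, 0 ≤ c a x)
    (hcover : ∀ a ∈ G, 1 ≤ ∑ x ∈ S a, c a x)
    (hmaps : ∀ a ∈ G, ∀ x ∈ S a, F a x ∈ T ∧ w a ≤ w' (F a x))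
    (hdeg : ∀ b ∈ T, ∑ q ∈ G.sigma S with F q.1 q.2 = b, c q.1 q.2 ≤ K) :
    ∑ a ∈ G, w a ≤ K * ∑ b ∈ T, w' b := by
  have hmapsT : ∀ q ∈ G.sigma S, F q.1 q.2 ∈ T := fun q hq =>
    (hmaps q.1 (mem_sigma.1 hq).1 q.2 (mem_sigma.1 hq).2).1
  calc ∑ a ∈ G, w a ≤ ∑ a ∈ G, ∑ x ∈ S a, c a x * w a :=
        sum_le_sum fun a ha => by
          rw [← sum_mul]; exact le_mul_of_one_le_left (hw a ha) (hcover a ha)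
    _ ≤ ∑ a ∈ G, ∑ x ∈ S a, c a x * w' (F a x) :=
        sum_le_sum fun a ha => sum_le_sum fun x hx =>
          mul_le_mul_of_nonneg_left (hmaps a ha x hx).2 (hc a ha x hx)
    _ = ∑ b ∈ T, (∑ q ∈ G.sigma S with F q.1 q.2 = b, c q.1 q.2) * w' b := by
        rw [sum_sigma', ← sum_fiberwise_of_maps_to hmapsT]
        refine sum_congr rfl fun b _ => ?_
        rw [sum_mul]
        exact sum_congr rfl fun q hq => by rw [(mem_filter.1 hq).2]
    _ ≤ K * ∑ b ∈ T, w' b := by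
        rw [mul_sum]
        exact sum_le_sum fun b hb => mul_le_mul_of_nonneg_right (hdeg b hb) (hw' b hb)

section MultiPr

variable {k h : ℕ} {p : Fin k → ℝ}

theorem prod_apply_nonneg (hp : ∀ i, 0 ≤ p i) (ω : Fin h → Fin k) : 0 ≤ ∏ j, p (ω j) :=
  prod_nonneg fun j _ => hp (ω j)

theorem multiPr_eq_sum_filter (A : Set (Fin h → Fin k)) [DecidablePred (· ∈ A)] :
    multiPr k h p A = ∑ ω with ω ∈ A, ∏ j, p (ω j) := by
  rw [multiPr, sum_filter]
  exact sum_congr rfl fun ω _ => Set.indicator_apply _ _ _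

theorem multiPr_univ (hsum : ∑ i, p i = 1) : multiPr k h p Set.univ = 1 := by
  simp only [multiPr, Set.indicator_univ]
  rw [← Fintype.sum_pow, hsum, one_pow]

variable (hp : ∀ i, 0 ≤ p i)
include hp

theorem multiPr_nonneg (A : Set (Fin h → Fin k)) : 0 ≤ multiPr k h p A :=
  sum_nonneg fun ω _ => Set.indicator_nonneg (fun ω _ => prod_apply_nonneg hp ω) ω

theorem multiPr_mono {A B : Set (Fin h → Fin k)} (hAB : A ⊆ B) :
    multiPr k h p A ≤ multiPr k h p B :=
  sum_le_sum fun ω _ => Set.indicator_le_indicator_of_subset hAB (prod_apply_nonneg hp) ω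

theorem multiPr_union_le (A B : Set (Fin h → Fin k)) :
    multiPr k h p (A ∪ B) ≤ multiPr k h p A + multiPr k h p B := by
  rw [multiPr, multiPr, multiPr, ← sum_add_distrib]
  refine sum_le_sum fun ω _ => ?_
  rw [← Set.indicator_union_add_inter_apply]
  exact le_add_of_nonneg_right (Set.indicator_nonneg (fun ω _ => prod_apply_nonneg hp ω) ω)

theorem multiPr_iUnion_le {ι : Type*} [Fintype ι] (A : ι → Set (Fin h → Fin k)) :
    multiPr k h p (⋃ i, A i) ≤ ∑ i, multiPr k h p (A i) := by
  simp only [multiPr]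
  rw [sum_comm]
  refine sum_le_sum fun ω _ => ?_
  have hnonneg : ∀ i, 0 ≤ (A i).indicator (fun ω => ∏ j, p (ω j)) ω := fun i =>
    Set.indicator_nonneg (fun ω _ => prod_apply_nonneg hp ω) ω
  by_cases hω : ω ∈ ⋃ i, A i
  · obtain ⟨i, hi⟩ := Set.mem_iUnion.1 hω
    rw [Set.indicator_of_mem hω, ← Set.indicator_of_mem hi (fun ω => ∏ j, p (ω j))]
    exact single_le_sum (fun i _ => hnonneg i) (mem_univ i)
  · rw [Set.indicator_of_notMem hω]
    exact sum_nonneg fun i _ => hnonneg i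

end MultiPr

section Chernoff

open Real

variable {k h : ℕ} {p : Fin k → ℝ}

theorem one_add_pow_le_exp {x : ℝ} (hx : -1 ≤ x) (n : ℕ) : (1 + x) ^ n ≤ exp (n * x) := by
  rw [exp_nat_mul]
  exact pow_le_pow_left₀ (by linarith) (by linarith [add_one_le_exp x]) n

theorem pow_cnt_eq_prod (z : ℝ) (ω : Fin h → Fin k) (i : Fin k) :
    z ^ cnt ω i = ∏ j, if ω j = i then z else 1 := by
  rw [prod_ite, prod_const_one, mul_one, prod_const]
  rfl

theorem sum_prod_mul_pow_cnt (hsum : ∑ i, p i = 1) (i : Fin k) (z : ℝ) :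
    ∑ ω : Fin h → Fin k, (∏ j, p (ω j)) * z ^ cnt ω i = (1 + p i * (z - 1)) ^ h := by
  simp_rw [pow_cnt_eq_prod, ← prod_mul_distrib]
  refine (Fintype.sum_pow (fun v => p v * if v = i then z else 1) h).symm.trans ?_
  have hsplit : ∀ v, p v * (if v = i then z else 1) = p v + if v = i then p i * (z - 1) else 0 := by
    intro v
    split_ifs with hv
    · rw [hv]; ring
    · simp
  simp_rw [hsplit]
  rw [sum_add_distrib, hsum, sum_ite_eq']
  simp

theorem multiPr_mul_exp_le (hp : ∀ i, 0 ≤ p i) (hsum : ∑ i, p i = 1) {i : Fin k} (t : ℝ) {b : ℕ}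
    {A : Set (Fin h → Fin k)} (hA : ∀ ω ∈ A, t * b ≤ t * cnt ω i) :
    multiPr k h p A * exp (t * b) ≤ exp (h * p i * (exp t - 1)) := by
  have hpi : p i ≤ 1 := hsum ▸ single_le_sum (fun j _ => hp j) (mem_univ i)
  calc multiPr k h p A * exp (t * b)
      ≤ ∑ ω : Fin h → Fin k, (∏ j, p (ω j)) * exp t ^ cnt ω i := by
        rw [multiPr, sum_mul]
        refine sum_le_sum fun ω _ => ?_
        rw [← exp_nat_mul, mul_comm (cnt ω i : ℝ)]
        by_cases hω : ω ∈ A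
        · rw [Set.indicator_of_mem hω]
          exact mul_le_mul_of_nonneg_left (exp_le_exp.2 (hA ω hω)) (prod_apply_nonneg hp ω)
        · rw [Set.indicator_of_notMem hω, zero_mul]
          exact mul_nonneg (prod_apply_nonneg hp ω) (exp_pos _).le
    _ = (1 + p i * (exp t - 1)) ^ h := sum_prod_mul_pow_cnt hsum i _
    _ ≤ exp (h * p i * (exp t - 1)) := by
        rw [mul_assoc]
        exact one_add_pow_le_exp (by nlinarith [exp_pos t, hp i]) h

theorem multiPr_le_cnt_le_exp (hp : ∀ i, 0 ≤ p i) (hsum : ∑ i, p i = 1) {i : Fin k} {m : ℝ}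
    {b : ℕ} (hpi : h * p i ≤ m) (hb : 3 * m ≤ b) :
    multiPr k h p {ω | b ≤ cnt ω i} ≤ exp (-m) := by
  have key := multiPr_mul_exp_le (A := {ω : Fin h → Fin k | b ≤ cnt ω i}) hp hsum 1
    fun ω hω => by simpa using (Nat.cast_le.2 hω : (b : ℝ) ≤ cnt ω i)
  rw [one_mul, ← le_div_iff₀ (exp_pos _), ← exp_sub] at key
  refine key.trans (exp_le_exp.2 ?_)
  have : 0 ≤ (h : ℝ) * p i := mul_nonneg h.cast_nonneg (hp i)
  nlinarith [exp_one_lt_d9, exp_one_gt_d9]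

theorem multiPr_cnt_le_le_exp (hp : ∀ i, 0 ≤ p i) (hsum : ∑ i, p i = 1) {i : Fin k} {b : ℕ}
    (hb : (b : ℝ) ≤ h * p i / 2) :
    multiPr k h p {ω | cnt ω i ≤ b} ≤ exp (-(h * p i) / 8) := by
  have key := multiPr_mul_exp_le (A := {ω : Fin h → Fin k | cnt ω i ≤ b}) hp hsum (-log 2)
    fun ω hω => by
      rw [neg_mul, neg_mul, neg_le_neg_iff]
      exact mul_le_mul_of_nonneg_left (Nat.cast_le.2 hω) (log_nonneg one_le_two)
  rw [exp_neg, exp_log two_pos, ← le_div_iff₀ (exp_pos _), ← exp_sub] at key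
  refine key.trans (exp_le_exp.2 ?_)
  nlinarith [log_two_lt_d9, log_two_gt_d9, (b.cast_nonneg : (0 : ℝ) ≤ b)]

end Chernoff

section Recolor

variable {k h : ℕ}

def samplesOf (ω : Fin h → Fin k) (i : Fin k) : Finset (Fin h) := univ.filter fun x => ω x = i

@[simp]
theorem mem_samplesOf {ω : Fin h → Fin k} {i : Fin k} {x : Fin h} :
    x ∈ samplesOf ω i ↔ ω x = i := by
  simp [samplesOf]

theorem card_samplesOf (ω : Fin h → Fin k) (i : Fin k) : (samplesOf ω i).card = cnt ω i := rfl

theorem sum_cnt (ω : Fin h → Fin k) : ∑ i, cnt ω i = h := by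
  simpa [cnt] using (card_eq_sum_card_fiberwise (f := ω) (s := univ) (t := univ)
    fun x _ => mem_univ _).symm

theorem card_mul_le_of_le_cnt {ω : Fin h → Fin k} {s : Finset (Fin k)} {a : ℕ}
    (hs : ∀ j ∈ s, a ≤ cnt ω j) : s.card * a ≤ h :=
  calc s.card * a ≤ ∑ j ∈ s, cnt ω j := card_nsmul_le_sum s _ a hs
    _ ≤ ∑ j, cnt ω j := sum_le_sum_of_subset (subset_univ s)
    _ = h := sum_cnt ω

def recolor (ω : Fin h → Fin k) (s : Finset (Fin h)) (v : Fin k) : Fin h → Fin k :=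
  fun x => if x ∈ s then v else ω x

variable {ω : Fin h → Fin k} {s : Finset (Fin h)} {u v : Fin k}

theorem subset_samplesOf_recolor : s ⊆ samplesOf (recolor ω s v) v := fun x hx => by
  simp [recolor, hx]

theorem recolor_recolor (hs : s ⊆ samplesOf ω u) : recolor (recolor ω s v) s u = ω := by
  funext x
  by_cases hx : x ∈ s
  · simpa [recolor, hx] using (mem_samplesOf.1 (hs hx)).symm
  · simp [recolor, hx]

variable (hs : s ⊆ samplesOf ω u) (huv : u ≠ v)
include hs huv

theorem cnt_recolor_self : cnt (recolor ω s v) v = cnt ω v + s.card := by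
  have hset : samplesOf (recolor ω s v) v = s ∪ samplesOf ω v := by
    ext x; by_cases hx : x ∈ s <;> simp [recolor, hx]
  have hdisj : Disjoint s (samplesOf ω v) := disjoint_left.2 fun x hx hx' =>
    huv ((mem_samplesOf.1 (hs hx)).symm.trans (mem_samplesOf.1 hx'))
  rw [← card_samplesOf, hset, card_union_of_disjoint hdisj, add_comm, card_samplesOf]

theorem cnt_recolor_source : cnt (recolor ω s v) u = cnt ω u - s.card := by
  have hset : samplesOf (recolor ω s v) u = samplesOf ω u \ s := by
    ext x; by_cases hx : x ∈ s <;> simp [recolor, hx, huv.symm]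
  rw [← card_samplesOf, hset, card_sdiff_of_subset hs, card_samplesOf]

omit huv in
theorem cnt_recolor_of_ne {i : Fin k} (hiu : i ≠ u) (hiv : i ≠ v) :
    cnt (recolor ω s v) i = cnt ω i := by
  have hset : samplesOf (recolor ω s v) i = samplesOf ω i := by
    ext x
    by_cases hx : x ∈ s
    · have hxu : ω x = u := mem_samplesOf.1 <| hs hx
      simp [recolor, hx, hxu, hiu.symm, hiv.symm]
    · simp [recolor, hx]
  rw [← card_samplesOf, hset, card_samplesOf]

omit huv in
theorem prod_le_prod_recolor {p : Fin k → ℝ} (hp : ∀ i, 0 ≤ p i) (hpuv : p u ≤ p v) :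
    ∏ j, p (ω j) ≤ ∏ j, p (recolor ω s v j) :=
  prod_le_prod (fun j _ => hp _) fun j _ => by
    by_cases hj : j ∈ s
    · have hju : ω j = u := mem_samplesOf.1 <| hs hj
      simpa [recolor, hj, hju] using hpuv
    · simp [recolor, hj]

end Recolor

section Switching

variable {k h : ℕ} {o : Fin k}

def rivalMax (o : Fin k) (ω : Fin h → Fin k) : ℕ := (univ.erase o).sup (cnt ω)

theorem cnt_le_rivalMax {ω : Fin h → Fin k} {i : Fin k} (hi : i ≠ o) : cnt ω i ≤ rivalMax o ω :=
  le_sup (mem_erase.2 ⟨hi, mem_univ i⟩)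

def contested (a B : ℕ) (o : Fin k) : Set (Fin h → Fin k) :=
  {ω | a < cnt ω o ∧ cnt ω o ≤ rivalMax o ω ∧ rivalMax o ω ≤ B}

def deficit (o : Fin k) (ω : Fin h → Fin k) : ℕ := rivalMax o ω + 1 - cnt ω o

/-- The switch `⟨j, s⟩` moves the samples `s` of a most sampled rival `j` over to `o`. All top
rivals are allowed, so that no choice among them has to be made. -/
def switches (o : Fin k) (ω : Fin h → Fin k) : Finset (Σ _ : Fin k, Finset (Fin h)) :=
  (univ.filter fun j => j ≠ o ∧ cnt ω j = rivalMax o ω).sigma fun j =>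
    (samplesOf ω j).powersetCard (deficit o ω)

theorem mem_switches {ω : Fin h → Fin k} {x : Σ _ : Fin k, Finset (Fin h)} :
    x ∈ switches o ω ↔
      (x.1 ≠ o ∧ cnt ω x.1 = rivalMax o ω) ∧ x.2 ⊆ samplesOf ω x.1 ∧ x.2.card = deficit o ω := by
  simp [switches]

variable {ω : Fin h → Fin k} (hpos : 0 < cnt ω o) (hle : cnt ω o ≤ rivalMax o ω)
include hpos hle

theorem one_le_sum_switches :
    1 ≤ ∑ _x ∈ switches o ω, (1 / (rivalMax o ω).choose (deficit o ω) : ℝ) := by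
  obtain ⟨j, hj, hjmax⟩ := exists_mem_eq_sup (univ.erase o)
    (nonempty_of_ne_empty fun hempty => by
      rw [rivalMax, hempty, sup_empty] at hle
      exact hpos.not_ge hle) (cnt ω)
  have hchoose : (0 : ℝ) < (rivalMax o ω).choose (deficit o ω) :=
    Nat.cast_pos.2 (Nat.choose_pos (by unfold deficit; omega))
  have hcard : (switches o ω).card
      = (univ.filter fun j => j ≠ o ∧ cnt ω j = rivalMax o ω).card
        * (rivalMax o ω).choose (deficit o ω) := by
    rw [switches, card_sigma, ← smul_eq_mul, ← sum_const]
    refine sum_congr rfl fun i hi => ?_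
    rw [card_powersetCard, card_samplesOf, (mem_filter.1 hi).2.2]
  have hrivals : 1 ≤ (univ.filter fun j => j ≠ o ∧ cnt ω j = rivalMax o ω).card :=
    card_pos.2 ⟨j, mem_filter.2 ⟨mem_univ j, (mem_erase.1 hj).1, hjmax.symm⟩⟩
  rw [sum_const, nsmul_eq_mul, hcard, Nat.cast_mul, mul_one_div, mul_div_assoc,
    div_self hchoose.ne', mul_one]
  exact_mod_cast hrivals

variable {x : Σ _ : Fin k, Finset (Fin h)} (hx : x ∈ switches o ω)
include hx

omit hpos in
theorem cnt_switch_self : cnt (recolor ω x.2 o) o = rivalMax o ω + 1 := by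
  obtain ⟨⟨hxo, -⟩, hsub, hcard⟩ := mem_switches.1 hx
  rw [cnt_recolor_self hsub hxo, hcard, deficit]
  omega

theorem cnt_switch_rival : cnt (recolor ω x.2 o) x.1 + 1 = cnt ω o := by
  obtain ⟨⟨hxo, hxmax⟩, hsub, hcard⟩ := mem_switches.1 hx
  rw [cnt_recolor_source hsub hxo, hcard, hxmax, deficit]
  omega

theorem switch_mem_Wstrict : recolor ω x.2 o ∈ Wstrict k h o := by
  intro i hio
  rw [cnt_switch_self hle hx]
  by_cases hix : i = x.1
  · have := cnt_switch_rival hpos hle hx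
    rw [hix]
    omega
  · obtain ⟨⟨hxo, -⟩, hsub, -⟩ := mem_switches.1 hx
    rw [cnt_recolor_of_ne hsub hix hio]
    exact Nat.lt_succ_of_le (cnt_le_rivalMax hio)

end Switching

theorem Nat.cast_choose_succ_div_choose {n c d : ℕ} (hcd : c + d = n) :
    ((n + 1).choose d : ℝ) / n.choose d = (n + 1) / (c + 1) := by
  have hpos : (0 : ℝ) < n.choose d := Nat.cast_pos.2 (Nat.choose_pos (by omega))
  rw [div_eq_div_iff hpos.ne' (by positivity)]
  have key := Nat.choose_mul_succ_eq n d
  rw [show n + 1 - d = c + 1 by omega] at key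
  exact_mod_cast key.symm.trans (mul_comm _ _)

section SwitchingBound

variable {k h : ℕ} {o : Fin k} {a B : ℕ}

def reverseSwitches (a : ℕ) (o : Fin k) (ω' : Fin h → Fin k) :
    Finset (Σ _ : Fin k, Finset (Fin h)) :=
  (univ.filter fun j => j ≠ o ∧ a ≤ cnt ω' j).sigma fun j =>
    (samplesOf ω' o).powersetCard (cnt ω' o - 1 - cnt ω' j)

theorem sum_reverseSwitches_le (ha : 0 < a) {ω' : Fin h → Fin k}
    (hω' : ω' ∈ Wstrict k h o) (hB : cnt ω' o ≤ B + 1) :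
    ∑ x ∈ reverseSwitches a o ω', (1 / (cnt ω' o - 1).choose x.2.card : ℝ)
      ≤ (B + 1) / (a + 1) * (h / a) := by
  set J := univ.filter fun j => j ≠ o ∧ a ≤ cnt ω' j
  have hterm : ∀ j ∈ J, ∑ s ∈ (samplesOf ω' o).powersetCard (cnt ω' o - 1 - cnt ω' j),
      (1 / (cnt ω' o - 1).choose s.card : ℝ) ≤ (B + 1) / (a + 1) := by
    intro j hj
    obtain ⟨hjo, hja⟩ := (mem_filter.1 hj).2
    have hlt := hω' j hjo
    obtain ⟨n, hn⟩ : ∃ n, cnt ω' o = n + 1 := ⟨cnt ω' o - 1, by omega⟩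
    rw [sum_congr rfl fun s hs => by rw [(mem_powersetCard.1 hs).2], sum_const,
      card_powersetCard, card_samplesOf, nsmul_eq_mul, mul_one_div, hn, Nat.add_sub_cancel,
      Nat.cast_choose_succ_div_choose (c := cnt ω' j) (by omega)]
    gcongr
    exact_mod_cast (by omega : n ≤ B)
  have hJ : (J.card : ℝ) ≤ h / a := by
    rw [le_div_iff₀ (by exact_mod_cast ha)]
    exact_mod_cast card_mul_le_of_le_cnt (s := J) (ω := ω') fun j hj => (mem_filter.1 hj).2.2
  calc ∑ x ∈ reverseSwitches a o ω', (1 / (cnt ω' o - 1).choose x.2.card : ℝ)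
      = ∑ j ∈ J, ∑ s ∈ (samplesOf ω' o).powersetCard (cnt ω' o - 1 - cnt ω' j),
          (1 / (cnt ω' o - 1).choose s.card : ℝ) := sum_sigma _ _ _
    _ ≤ ∑ _j ∈ J, ((B + 1) / (a + 1) : ℝ) := sum_le_sum hterm
    _ ≤ (B + 1) / (a + 1) * (h / a) := by
      rw [sum_const, nsmul_eq_mul, mul_comm]
      gcongr

theorem switch_mem_reverseSwitches {ω : Fin h → Fin k} (hω : ω ∈ contested a B o)
    {x : Σ _ : Fin k, Finset (Fin h)} (hx : x ∈ switches o ω) :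
    x ∈ reverseSwitches a o (recolor ω x.2 o) := by
  obtain ⟨hao, hle, -⟩ := hω
  have hself := cnt_switch_self hle hx
  have hrival := cnt_switch_rival (by omega) hle hx
  obtain ⟨⟨hxo, -⟩, -, hcard⟩ := mem_switches.1 hx
  refine mem_sigma.2 ⟨mem_filter.2 ⟨mem_univ _, hxo, by omega⟩,
    mem_powersetCard.2 ⟨subset_samplesOf_recolor, ?_⟩⟩
  rw [hcard, hself, deficit]
  omega

open Classical in
theorem sum_fiber_switches_le (ha : 0 < a) {ω' : Fin h → Fin k} (hω' : ω' ∈ Wstrict k h o)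
    (hB : cnt ω' o ≤ B + 1) :
    ∑ q ∈ ({ω | ω ∈ contested a B o} : Finset _).sigma (switches o)
        with recolor q.1 q.2.2 o = ω', (1 / (rivalMax o q.1).choose (deficit o q.1) : ℝ)
      ≤ (B + 1) / (a + 1) * (h / a) := by
  set Φ := ({ω | ω ∈ contested a B o} : Finset _).sigma (switches o)
    |>.filter fun q => recolor q.1 q.2.2 o = ω'
  have hΦ : ∀ q ∈ Φ, q.1 ∈ contested a B o ∧ q.2 ∈ switches o q.1 ∧ recolor q.1 q.2.2 o = ω' :=
    fun q hq => by simpa [Φ, and_assoc] using hq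
  calc ∑ q ∈ Φ, (1 / (rivalMax o q.1).choose (deficit o q.1) : ℝ)
      = ∑ q ∈ Φ, (1 / (cnt ω' o - 1).choose q.2.2.card : ℝ) := sum_congr rfl fun q hq => by
        obtain ⟨⟨-, hle, -⟩, hx, rfl⟩ := hΦ q hq
        rw [cnt_switch_self hle hx, (mem_switches.1 hx).2.2, Nat.add_sub_cancel]
    _ = ∑ x ∈ Φ.image Sigma.snd, (1 / (cnt ω' o - 1).choose x.2.card : ℝ) := by
        refine (sum_image (f := fun x : Σ _ : Fin k, Finset (Fin h) =>
          (1 / (cnt ω' o - 1).choose x.2.card : ℝ)) fun q hq q' hq' hqq' => ?_).symm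
        -- a switch is undone by moving `s` back to `j`, so `⟨ω, j, s⟩ ↦ ⟨j, s⟩` is injective
        have hinv : ∀ q ∈ Φ, q.1 = recolor ω' q.2.2 q.2.1 := fun q hq => by
          obtain ⟨-, hx, hrec⟩ := hΦ q hq
          rw [← hrec, recolor_recolor (mem_switches.1 hx).2.1]
        exact Sigma.ext (by rw [hinv q hq, hinv q' hq', hqq']) (heq_of_eq hqq')
    _ ≤ ∑ x ∈ reverseSwitches a o ω', (1 / (cnt ω' o - 1).choose x.2.card : ℝ) := by
        refine sum_le_sum_of_subset_of_nonneg (image_subset_iff.2 fun q hq => ?_)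
          fun _ _ _ => by positivity
        obtain ⟨hω, hx, rfl⟩ := hΦ q hq
        exact switch_mem_reverseSwitches hω hx
    _ ≤ (B + 1) / (a + 1) * (h / a) := sum_reverseSwitches_le ha hω' hB

open Classical in
theorem multiPr_contested_le {p : Fin k → ℝ} (hp : ∀ i, 0 ≤ p i) (hmax : ∀ i, p i ≤ p o)
    (ha : 0 < a) :
    multiPr k h p (contested a B o)
      ≤ (B + 1) / (a + 1) * (h / a) * multiPr k h p (Wstrict k h o) := by
  rw [multiPr_eq_sum_filter, multiPr_eq_sum_filter]
  calc ∑ ω with ω ∈ contested a B o, ∏ j, p (ω j)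
      ≤ (B + 1) / (a + 1) * (h / a) *
          ∑ ω' with ω' ∈ Wstrict k h o ∧ cnt ω' o ≤ B + 1, ∏ j, p (ω' j) := by
        refine sum_le_mul_sum_of_fractional_switching (S := switches o)
          (F := fun ω x => recolor ω x.2 o)
          (c := fun ω _ => (1 / (rivalMax o ω).choose (deficit o ω) : ℝ))
          (fun ω _ => prod_apply_nonneg hp ω) (fun ω _ => prod_apply_nonneg hp ω)
          (fun _ _ _ _ => by positivity) (fun ω hω => ?_) (fun ω hω x hx => ?_)
          fun ω' hω' => ?_
        · obtain ⟨hao, hle, -⟩ := (mem_filter.1 hω).2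
          exact one_le_sum_switches (by omega) hle
        · obtain ⟨hao, hle, hB⟩ := (mem_filter.1 hω).2
          refine ⟨mem_filter.2 ⟨mem_univ _, switch_mem_Wstrict (by omega) hle hx, ?_⟩,
            prod_le_prod_recolor (mem_switches.1 hx).2.1 hp (hmax _)⟩
          rw [cnt_switch_self hle hx]
          omega
        · obtain ⟨hstrict, hB⟩ := (mem_filter.1 hω').2
          exact sum_fiber_switches_le ha hstrict hB
    _ ≤ (B + 1) / (a + 1) * (h / a) * ∑ ω' with ω' ∈ Wstrict k h o, ∏ j, p (ω' j) := by
        refine mul_le_mul_of_nonneg_left (sum_le_sum_of_subset_of_nonneg (fun ω' hω' => ?_)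
          fun ω _ _ => prod_apply_nonneg hp ω) (by positivity)
        exact mem_filter.2 ⟨mem_univ _, (mem_filter.1 hω').2.1⟩

end SwitchingBound

section LowerBound

open Real

variable {k h : ℕ} {p : Fin k → ℝ} {o : Fin k}

theorem compl_Wstrict_subset (a B : ℕ) :
    (Wstrict k h o)ᶜ ⊆
      contested a B o ∪ {ω | cnt ω o ≤ a} ∪ ⋃ i, {ω | B + 1 ≤ cnt ω i} := by
  intro ω hω
  obtain ⟨i, hio, hi⟩ : ∃ i, i ≠ o ∧ cnt ω o ≤ cnt ω i := by
    simpa [Wstrict] using hω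
  by_cases hlow : cnt ω o ≤ a
  · exact Or.inl (Or.inr hlow)
  by_cases hhigh : ∃ i, B + 1 ≤ cnt ω i
  · exact Or.inr (Set.mem_iUnion.2 hhigh)
  simp only [not_exists, not_le] at hhigh
  refine Or.inl (Or.inl ⟨by omega, hi.trans (cnt_le_rivalMax hio), ?_⟩)
  exact Finset.sup_le fun j _ => Nat.lt_succ_iff.1 (hhigh j)

theorem one_le_multiPr_Wstrict_add (hp : ∀ i, 0 ≤ p i) (hsum : ∑ i, p i = 1) (a B : ℕ) :
    1 ≤ multiPr k h p (Wstrict k h o) + multiPr k h p (contested a B o)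
      + multiPr k h p {ω | cnt ω o ≤ a} + ∑ i, multiPr k h p {ω | B + 1 ≤ cnt ω i} := by
  have hcompl := multiPr_mono hp (compl_Wstrict_subset (h := h) (o := o) a B)
  have hunion := multiPr_union_le hp (contested a B o ∪ {ω | cnt ω o ≤ a})
    (⋃ i, {ω : Fin h → Fin k | B + 1 ≤ cnt ω i})
  have hunion' := multiPr_union_le hp (contested a B o) {ω : Fin h → Fin k | cnt ω o ≤ a}
  have hiUnion := multiPr_iUnion_le hp fun i => {ω : Fin h → Fin k | B + 1 ≤ cnt ω i}
  have htotal := multiPr_union_le hp (Wstrict k h o) (Wstrict k h o)ᶜ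
  rw [Set.union_compl_self, multiPr_univ hsum] at htotal
  linarith

theorem multiPr_tails_le (hp : ∀ i, 0 ≤ p i) (hsum : ∑ i, p i = 1) (hmax : ∀ i, p i ≤ p o)
    (hμ : 8 * log (8 * k) ≤ h * p o) {a B : ℕ} (ha : (a : ℝ) ≤ h * p o / 2)
    (hB : 3 * (h * p o) ≤ B + 1) :
    multiPr k h p {ω | cnt ω o ≤ a} + ∑ i, multiPr k h p {ω | B + 1 ≤ cnt ω i} ≤ 1 / 4 := by
  have hk : (1 : ℝ) ≤ k := Nat.one_le_cast.2 o.pos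
  have hexp : exp (-log (8 * k)) = 1 / (8 * k) := by
    rw [exp_neg, exp_log (by positivity), one_div]
  have hlow : multiPr k h p {ω | cnt ω o ≤ a} ≤ 1 / 8 := by
    refine (multiPr_cnt_le_le_exp hp hsum ha).trans ?_
    calc exp (-(h * p o) / 8) ≤ exp (-log (8 * k)) := exp_le_exp.2 (by linarith)
      _ ≤ 1 / 8 := by rw [hexp]; gcongr; linarith
  have hhigh : ∑ i, multiPr k h p {ω | B + 1 ≤ cnt ω i} ≤ 1 / 8 := by
    have hlog : log (8 * k) ≤ h * p o := by
      linarith [log_nonneg (by linarith : (1 : ℝ) ≤ 8 * k)]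
    calc ∑ i, multiPr k h p {ω | B + 1 ≤ cnt ω i}
        ≤ ∑ _i : Fin k, exp (-log (8 * k)) := sum_le_sum fun i _ =>
          (multiPr_le_cnt_le_exp hp hsum
            (mul_le_mul_of_nonneg_left (hmax i) h.cast_nonneg) (by exact_mod_cast hB)).trans
          (exp_le_exp.2 (neg_le_neg hlog))
      _ = 1 / 8 := by
        rw [sum_const, card_univ, Fintype.card_fin, nsmul_eq_mul, hexp]
        field_simp
  linarith

theorem contested_factor_le {μ q : ℝ} (hμ : 6 ≤ μ) (hq : 0 < q) (hμq : μ = h * q) :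
    ((⌊3 * μ⌋₊ : ℝ) + 1) / (⌊μ / 2⌋₊ + 1) * (h / ⌊μ / 2⌋₊) ≤ 21 / q := by
  have ha := Nat.lt_floor_add_one (μ / 2)
  have hB := Nat.floor_le (by linarith : 0 ≤ 3 * μ)
  have ha3 : μ / 3 ≤ ⌊μ / 2⌋₊ := by linarith
  have h1 : ((⌊3 * μ⌋₊ : ℝ) + 1) / (⌊μ / 2⌋₊ + 1) ≤ 7 := by
    rw [div_le_iff₀ (by linarith)]
    linarith
  have h2 : (h : ℝ) / ⌊μ / 2⌋₊ ≤ 3 / q := by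
    rw [div_le_div_iff₀ (by linarith) hq]
    linarith
  calc ((⌊3 * μ⌋₊ : ℝ) + 1) / (⌊μ / 2⌋₊ + 1) * (h / ⌊μ / 2⌋₊) ≤ 7 * (3 / q) := by
        gcongr
    _ = 21 / q := by ring

theorem multiPr_Wstrict_ge (hp : ∀ i, 0 ≤ p i) (hsum : ∑ i, p i = 1) (hmax : ∀ i, p i ≤ p o)
    (hμ : 8 * log (8 * k) ≤ h * p o) :
    p o / 32 ≤ multiPr k h p (Wstrict k h o) := by
  have hμ16 : 16 ≤ h * p o := by
    have hk : (1 : ℝ) ≤ k := Nat.one_le_cast.2 o.pos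
    have h8 : log 8 ≤ log (8 * k) := log_le_log (by norm_num) (by linarith)
    have h8' : log 8 = 3 * log 2 := by
      rw [show (8 : ℝ) = 2 ^ 3 by norm_num, log_pow]; norm_num
    linarith [log_two_gt_d9]
  have hpo : 0 < p o := pos_of_mul_pos_right (by linarith) h.cast_nonneg
  have hpo1 : p o ≤ 1 := hsum ▸ single_le_sum (fun i _ => hp i) (mem_univ o)
  have hcover :=
    one_le_multiPr_Wstrict_add (h := h) (o := o) hp hsum ⌊h * p o / 2⌋₊ ⌊3 * (h * p o)⌋₊
  have htails := multiPr_tails_le hp hsum hmax hμ (Nat.floor_le (by linarith))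
    (Nat.lt_floor_add_one (3 * (h * p o))).le
  have hswitch := multiPr_contested_le (h := h) hp hmax (a := ⌊h * p o / 2⌋₊)
    (B := ⌊3 * (h * p o)⌋₊) (Nat.floor_pos.2 (by linarith))
  have hK := contested_factor_le (by linarith) hpo rfl
  have h1 : 3 / 4 ≤ (1 + 21 / p o) * multiPr k h p (Wstrict k h o) := by
    nlinarith [mul_le_mul_of_nonneg_right hK (multiPr_nonneg hp (Wstrict k h o))]
  rw [one_add_div hpo.ne', div_mul_eq_mul_div, le_div_iff₀ hpo] at h1
  nlinarith

end LowerBound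

/-- there are constants `C, c > 0` such that for `n` large enough,
`k ≤ n`, `p_1 ≥ p_2 ≥ … ≥ p_k` and `h·p_1 ≥ C·log n`, the probability that
opinion 1 is sampled strictly more than every other opinion is at least `c·p_1`. -/
theorem multinomial_strict_max_prob_lower_bound :
    ∃ C c : ℝ, 0 < C ∧ 0 < c ∧
      ∃ n0 : ℕ, ∀ (n k h : ℕ), n0 ≤ n → ∀ (hk : 2 ≤ k), 1 ≤ h → k ≤ n →
        ∀ p : Fin k → ℝ, (∀ i, 0 ≤ p i) → ∑ i, p i = 1 →
          (∀ i j : Fin k, i ≤ j → p j ≤ p i) →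
          C * Real.log n ≤ (h : ℝ) * p (o₁ k hk) →
          c * p (o₁ k hk) ≤
            multiPr k h p {ω | ∀ i, i ≠ o₁ k hk → cnt ω i < cnt ω (o₁ k hk)} := by
  refine ⟨16, 1 / 32, by norm_num, by norm_num, 8, ?_⟩
  intro n k h hn hk _ hkn p hp hsum hsorted hC
  have hmax : ∀ i, p i ≤ p (o₁ k hk) := fun i => hsorted _ i (Nat.zero_le i.val)
  have hlog : 8 * Real.log (8 * k) ≤ 16 * Real.log n := by
    have hn8 : (8 : ℝ) ≤ n := by exact_mod_cast hn
    have hk2 : (2 : ℝ) ≤ k := by exact_mod_cast hk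
    have hkn' : (k : ℝ) ≤ n := by exact_mod_cast hkn
    have h1 : Real.log (8 * k) ≤ Real.log (8 * n) := Real.log_le_log (by linarith) (by linarith)
    have h2 : Real.log 8 ≤ Real.log n := Real.log_le_log (by norm_num) hn8
    rw [Real.log_mul (x := 8) (y := n) (by norm_num) (by linarith)] at h1
    linarith
  have hstrict := multiPr_Wstrict_ge hp hsum hmax (hlog.trans hC)
  change 1 / 32 * p (o₁ k hk) ≤ multiPr k h p (Wstrict k h (o₁ k hk))
  linarith
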